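/- For every state S and every state S' obtained from S by a single legal move of the ordered Zeckendorf game, f(S') < f(S); since f takes positive integer values, each legal move decreases f by at least 1. -/
import Mathlib


/-- Fibonacci numbers indexed so that `F 1 = 1`, `F 2 = 2`,
and `F (i+1) = F i + F (i-1)`. -/
def F (i : ℕ) : ℕ := Nat.fib (i + 1)

/-- A single legal move of the ordered Zeckendorf game, acting on an
adjacent pair of entries of the list of indices. -/
inductive Move : List ℕ → List ℕ → Prop
  | merge (a b : List ℕ) (i : ℕ) (hi : 1 ≤ i) :
      Move (a ++ [i, i + 1] ++ b) (a ++ [i + 2] ++ b)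
  | mergeOnes (a b : List ℕ) :
      Move (a ++ [1, 1] ++ b) (a ++ [2] ++ b)
  | split (a b : List ℕ) (i : ℕ) (hi : 2 < i) :
      Move (a ++ [i, i] ++ b) (a ++ [i - 2, i + 1] ++ b)
  | splitTwos (a b : List ℕ) :
      Move (a ++ [2, 2] ++ b) (a ++ [1, 3] ++ b)
  | switch (a b : List ℕ) (i j : ℕ) (hj : 1 ≤ j) (hij : j < i) :
      Move (a ++ [i, j] ++ b) (a ++ [j, i] ++ b)

/-- A play of the ordered Zeckendorf game on `n` with `m` moves:
the initial state is `n` copies of `1`, and each step is a legal move. -/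
def IsPlay (n : ℕ) (s : ℕ → List ℕ) (m : ℕ) : Prop :=
  s 0 = List.replicate n 1 ∧ ∀ t < m, Move (s t) (s (t + 1))

/-- A state is terminal if no legal move applies to it. -/
def Terminal (S : List ℕ) : Prop := ∀ T, ¬ Move S T

/-- The total Fibonacci value of a state. -/
def val (S : List ℕ) : ℕ := (S.map F).sum

/-- The monovariant `f(S) = Σ_{j=1}^k (k+1−j)·F_{i_j}` (here with
`j` running over 0-based positions, so the weight of position `j` is
`k − j`). -/
def f (S : List ℕ) : ℕ := ∑ j : Fin S.length, (S.length - (j : ℕ)) * F (S.get j)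

/-- `M n` is the maximal number of moves in a completed play of the
ordered Zeckendorf game on `n`. -/
noncomputable def M (n : ℕ) : ℕ :=
  sSup {m | ∃ s : ℕ → List ℕ, IsPlay n s m ∧ Terminal (s m)}

/-- The golden ratio `φ = (1+√5)/2`. -/
noncomputable def phi : ℝ := (1 + Real.sqrt 5) / 2

/-- Logarithm to base `φ`. -/
noncomputable def logphi (x : ℝ) : ℝ := Real.log x / Real.log phi

lemma f_nil : f [] = 0 := by simp [f]

lemma f_cons (x : ℕ) (s : List ℕ) : f (x :: s) = (s.length + 1) * F x + f s := by
  simp [f, Fin.sum_univ_succ]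

lemma f_append (a c : List ℕ) : f (a ++ c) = f a + c.length * val a + f c := by
  induction a with
  | nil => simp [f_nil, val]
  | cons x a ih =>
    simp only [List.cons_append, f_cons, ih, List.length_append, val, List.map_cons,
      List.sum_cons]
    ring

lemma move_lemma (a b u v : List ℕ) (hval : val v = val u) (hlen : v.length ≤ u.length)
    (hf : f v < f u) : f (a ++ v ++ b) < f (a ++ u ++ b) := by
  rw [List.append_assoc, List.append_assoc, f_append, f_append, f_append, f_append,
    List.length_append, List.length_append, hval]
  have h1 : (v.length + b.length) * val a ≤ (u.length + b.length) * val a :=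
    Nat.mul_le_mul_right _ (by omega)
  omega

lemma F_pos (i : ℕ) : 1 ≤ F i := Nat.fib_pos.mpr (by omega)

lemma F_mono {j i : ℕ} (hj : 1 ≤ j) (hij : j < i) : F j < F i := by
  unfold F
  exact (Nat.fib_lt_fib_succ (by omega)).trans_le (Nat.fib_mono (by omega))

lemma F_add_two (i : ℕ) : F (i + 2) = F (i + 1) + F i := by
  unfold F; rw [show i + 2 + 1 = (i + 1) + 2 by ring, Nat.fib_add_two]; ring

theorem stmt_4 (S S' : List ℕ) (h : Move S S') : f S' < f S := by
  cases h with
  | merge a b i hi =>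
    apply move_lemma
    · simp [val, F_add_two]; ring
    · simp
    · simp only [f_cons, f_nil, F_add_two]
      have := F_pos i
      simp; omega
  | mergeOnes a b =>
    apply move_lemma
    · simp [val]; decide
    · simp
    · simp only [f_cons, f_nil]
      norm_num [show F 1 = 1 from rfl, show F 2 = 2 from rfl]
  | split a b i hi =>
    obtain ⟨k, rfl⟩ : ∃ k, i = k + 3 := ⟨i - 3, by omega⟩
    apply move_lemma
    · simp only [val, List.map_cons, List.map_nil, List.sum_cons, List.sum_nil,
        show k + 3 - 2 = k + 1 by omega, show k + 3 + 1 = k + 2 + 2 by ring, F_add_two]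
      omega
    · simp
    · simp only [f_cons, f_nil, show k + 3 - 2 = k + 1 by omega]
      have h2 := F_add_two (k + 1)
      have h3 := F_add_two (k + 2)
      have hp := F_pos (k + 2)
      simp only [show k + 1 + 2 = k + 3 by ring, show k + 2 + 2 = k + 4 by ring,
        show k + 1 + 1 = k + 2 by ring, show k + 2 + 1 = k + 3 by ring,
        show k + 3 + 1 = k + 4 by ring] at h2 h3 ⊢
      simp only [List.length_cons, List.length_nil]
      omega
  | splitTwos a b =>
    apply move_lemma
    · simp [val]; decide
    · simp
    · simp only [f_cons, f_nil]
      norm_num [show F 1 = 1 from rfl, show F 2 = 2 from rfl, show F 3 = 3 from rfl]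
  | switch a b i j hj hij =>
    apply move_lemma
    · simp [val]; ring
    · simp
    · simp only [f_cons, f_nil]
      have := F_mono hj hij
      simp; omega
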